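/- (ESIC criterion) Let ρ be a separable state on ℋ_A⊗ℋ_B, i.e., a finite convex combination ρ = ∑_i p_i σ_i^A⊗σ_i^B of product density matrices. Let {E_j^A}, {E_k^B} be rescaled SIC POVMs (E_j = √(d(d+1)/2)·Π_j) on the two subsystems, and define the correlation matrix P with entries P_{jk} = tr(ρ(E_j^A⊗E_k^B)). Then ‖P‖_tr ≤ 1. -/

import Mathlib

/-!
Write `P = ∑ᵢ wᵢ aᵢ bᵢᵀ` with `(aᵢ)ⱼ = tr(σᵢᴬ Eⱼᴬ)` and `(bᵢ)ₖ = tr(σᵢᴮ Eₖᴮ)`, which are real.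

The trace norm of `M` equals `∑ᵢ ⟪uᵢ, M vᵢ⟫` for the orthonormal left and right singular vectors
of its nonzero singular values. For `M = a bᵀ` each summand is `⟪uᵢ, a⟫⟪b, vᵢ⟫`, so Cauchy–Schwarz
and Bessel's inequality bound the sum by `‖a‖‖b‖`; by linearity `‖P‖_tr ≤ ∑ᵢ wᵢ ‖aᵢ‖‖bᵢ‖`.

For a SIC, the `d²` projectors `xⱼ = |ψⱼ⟩⟨ψⱼ|` have Gram matrix `tr(xⱼxₖ) = (d δⱼₖ + 1)/(d + 1)`,
which is invertible, so they form a basis of the `d × d` matrices. The two bilinear forms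
`∑ⱼ tr(X xⱼ) tr(Y xⱼ)` and `d/(d+1) (tr(XY) + tr X tr Y)` agree on this basis, hence everywhere.
For a state `σ` and `Eⱼ = √(d(d+1)/2) xⱼ / d` this gives `∑ⱼ tr(σEⱼ)² = (1 + tr σ²)/2 ≤ 1`.
-/
open Matrix BigOperators
open scoped Kronecker ComplexOrder

/-- The positive semidefinite square root of a positive semidefinite matrix
(the definition of `Matrix.PosSemidef.sqrt` in the older Mathlib). -/
noncomputable def posSemidefSqrt {n 𝕜 : Type*} [Fintype n] [DecidableEq n] [RCLike 𝕜]
    {A : Matrix n n 𝕜} (hA : A.PosSemidef) : Matrix n n 𝕜 :=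
  hA.1.eigenvectorUnitary.1 * diagonal ((↑) ∘ (hA.1.eigenvalues · |>.sqrt))
  * (star hA.1.eigenvectorUnitary : Matrix n n 𝕜)

/-- Trace norm (sum of singular values) of a real matrix. -/
noncomputable def traceNorm {m n : Type*} [Fintype m] [Fintype n] [DecidableEq m]
    (M : Matrix m n ℝ) : ℝ :=
  (posSemidefSqrt (Matrix.posSemidef_self_mul_conjTranspose M)).trace

/-- The SIC overlap condition for a family of `d²` vectors in `ℂ^d`. -/
def IsSIC (d : ℕ) (ψ : Fin (d ^ 2) → Fin d → ℂ) : Prop :=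
  ∀ i j, ‖dotProduct (star (ψ i)) (ψ j)‖ ^ 2 =
    ((if i = j then (d : ℝ) else 0) + 1) / ((d : ℝ) + 1)

/-- The SIC POVM element `Π_k = |ψ_k⟩⟨ψ_k| / d`. -/
noncomputable def sicProj (d : ℕ) (ψ : Fin (d ^ 2) → Fin d → ℂ) (k : Fin (d ^ 2)) :
    Matrix (Fin d) (Fin d) ℂ :=
  (d : ℂ)⁻¹ • vecMulVec (ψ k) (star (ψ k))


open scoped InnerProductSpace

lemma Orthonormal.sqrt_sum_inner_sq_le {ι E : Type*} [Fintype ι] [NormedAddCommGroup E]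
    [InnerProductSpace ℝ E] {e : ι → E} (he : Orthonormal ℝ e) (x : E) :
    √(∑ i, ⟪e i, x⟫_ℝ ^ 2) ≤ ‖x‖ := by
  rw [Real.sqrt_le_left (norm_nonneg x)]
  simpa only [Real.norm_eq_abs, sq_abs] using he.sum_inner_products_le x (s := Finset.univ)

lemma toEuclideanLin_vecMulVec {m n : Type*} [Fintype n] [DecidableEq n] (a : m → ℝ) (b : n → ℝ)
    (x : EuclideanSpace ℝ n) :
    toEuclideanLin (vecMulVec a b) x = ⟪WithLp.toLp 2 b, x⟫_ℝ • WithLp.toLp 2 a := by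
  apply WithLp.ofLp_injective
  rw [ofLp_toLpLin, toLin'_apply, vecMulVec_mulVec, EuclideanSpace.inner_eq_star_dotProduct]
  simp [dotProduct_comm]

section TraceNorm

variable {m n : Type*} [Fintype m] [Fintype n]

lemma traceNorm_eq_sum_sqrt_eigenvalues [DecidableEq m] {M : Matrix m n ℝ}
    (hM : (M * Mᴴ).IsHermitian) :
    traceNorm M = ∑ i, √(hM.eigenvalues i) := by
  rw [traceNorm, posSemidefSqrt, trace_mul_cycle, Unitary.coe_star_mul_self, one_mul,
    trace_diagonal]
  rfl

lemma toEuclideanLin_conjTranspose_eigenvectorBasis [DecidableEq m] [DecidableEq n]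
    {M : Matrix m n ℝ} (hM : (M * Mᴴ).IsHermitian) (j : m) :
    toEuclideanLin M (toEuclideanLin Mᴴ (hM.eigenvectorBasis j)) =
      hM.eigenvalues j • hM.eigenvectorBasis j := by
  apply WithLp.ofLp_injective
  simp only [ofLp_toLpLin, toLin'_apply, mulVec_mulVec, hM.mulVec_eigenvectorBasis,
    WithLp.ofLp_smul]

lemma inner_conjTranspose_eigenvectorBasis [DecidableEq m] [DecidableEq n] {M : Matrix m n ℝ}
    (hM : (M * Mᴴ).IsHermitian) (i j : m) :
    ⟪toEuclideanLin Mᴴ (hM.eigenvectorBasis i), toEuclideanLin Mᴴ (hM.eigenvectorBasis j)⟫_ℝ =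
      if i = j then hM.eigenvalues i else 0 := by
  rw [toEuclideanLin_conjTranspose_eq_adjoint, LinearMap.adjoint_inner_left,
    ← toEuclideanLin_conjTranspose_eq_adjoint, toEuclideanLin_conjTranspose_eigenvectorBasis,
    inner_smul_right, orthonormal_iff_ite.mp hM.eigenvectorBasis.orthonormal]
  split_ifs with h <;> simp [h]

theorem exists_orthonormal_traceNorm_eq [DecidableEq m] [DecidableEq n] (M : Matrix m n ℝ) :
    ∃ (s : Finset m) (u : s → EuclideanSpace ℝ m) (v : s → EuclideanSpace ℝ n),
      Orthonormal ℝ u ∧ Orthonormal ℝ v ∧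
        traceNorm M = ∑ i, ⟪u i, toEuclideanLin M (v i)⟫_ℝ := by
  have hM := isHermitian_mul_conjTranspose_self M
  refine ⟨Finset.univ.filter (fun i => √(hM.eigenvalues i) ≠ 0),
    fun i => hM.eigenvectorBasis i,
    fun i => (√(hM.eigenvalues i))⁻¹ • toEuclideanLin Mᴴ (hM.eigenvectorBasis i), ?_, ?_, ?_⟩
  · exact hM.eigenvectorBasis.orthonormal.comp _ Subtype.val_injective
  · rw [orthonormal_iff_ite]
    rintro ⟨i, hi⟩ ⟨j, -⟩
    rw [Finset.mem_filter] at hi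
    simp only [inner_smul_left, inner_smul_right, inner_conjTranspose_eigenvectorBasis,
      conj_trivial, Subtype.mk.injEq]
    split_ifs with h
    · rw [← h, ← mul_assoc, ← mul_inv,
        Real.mul_self_sqrt (eigenvalues_self_mul_conjTranspose_nonneg M i),
        inv_mul_cancel₀ (Real.sqrt_ne_zero'.mp hi.2).ne']
    · simp
  · rw [traceNorm_eq_sum_sqrt_eigenvalues hM, ← Finset.sum_filter_ne_zero,
      ← Finset.sum_coe_sort]
    refine Finset.sum_congr rfl fun i _ => ?_
    rw [map_smul, inner_smul_right, toEuclideanLin_conjTranspose_eigenvectorBasis,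
      inner_smul_right, real_inner_self_eq_norm_sq, hM.eigenvectorBasis.orthonormal.1,
      one_pow, mul_one, ← div_eq_inv_mul, Real.div_sqrt]

lemma sum_inner_toEuclideanLin_vecMulVec_le [DecidableEq n] {ι : Type*} [Fintype ι]
    {u : ι → EuclideanSpace ℝ m} {v : ι → EuclideanSpace ℝ n}
    (hu : Orthonormal ℝ u) (hv : Orthonormal ℝ v) (a : m → ℝ) (b : n → ℝ) :
    ∑ i, ⟪u i, toEuclideanLin (vecMulVec a b) (v i)⟫_ℝ ≤
      ‖WithLp.toLp 2 a‖ * ‖WithLp.toLp 2 b‖ :=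
  calc ∑ i, ⟪u i, toEuclideanLin (vecMulVec a b) (v i)⟫_ℝ
      = ∑ i, ⟪u i, WithLp.toLp 2 a⟫_ℝ * ⟪v i, WithLp.toLp 2 b⟫_ℝ := by
        simp only [toEuclideanLin_vecMulVec, inner_smul_right, real_inner_comm, mul_comm]
    _ ≤ √(∑ i, ⟪u i, WithLp.toLp 2 a⟫_ℝ ^ 2) * √(∑ i, ⟪v i, WithLp.toLp 2 b⟫_ℝ ^ 2) :=
        Real.sum_mul_le_sqrt_mul_sqrt _ _ _
    _ ≤ ‖WithLp.toLp 2 a‖ * ‖WithLp.toLp 2 b‖ := by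
        gcongr
        exacts [hu.sqrt_sum_inner_sq_le _, hv.sqrt_sum_inner_sq_le _]

theorem traceNorm_sum_smul_vecMulVec_le [DecidableEq m] [DecidableEq n] {ι : Type*} [Fintype ι]
    (w : ι → ℝ) (hw : ∀ i, 0 ≤ w i) (a : ι → m → ℝ) (b : ι → n → ℝ) :
    traceNorm (∑ i, w i • vecMulVec (a i) (b i)) ≤
      ∑ i, w i * (‖WithLp.toLp 2 (a i)‖ * ‖WithLp.toLp 2 (b i)‖) := by
  obtain ⟨s, u, v, hu, hv, h⟩ :=
    exists_orthonormal_traceNorm_eq (∑ i, w i • vecMulVec (a i) (b i))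
  rw [h]
  simp only [map_sum, map_smul, LinearMap.sum_apply, LinearMap.smul_apply, inner_sum,
    inner_smul_right]
  rw [Finset.sum_comm]
  gcongr with i
  rw [← Finset.mul_sum]
  exact mul_le_mul_of_nonneg_left (sum_inner_toEuclideanLin_vecMulVec_le hu hv _ _) (hw i)

end TraceNorm

section SIC

lemma Matrix.IsHermitian.trace_mul_self {n 𝕜 : Type*} [Fintype n] [DecidableEq n] [RCLike 𝕜]
    {A : Matrix n n 𝕜} (hA : A.IsHermitian) :
    (A * A).trace = ∑ i, ((hA.eigenvalues i ^ 2 : ℝ) : 𝕜) := by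
  conv_lhs => rw [hA.spectral_theorem, ← map_mul, Unitary.conjStarAlgAut_apply,
    trace_mul_cycle, Unitary.coe_star_mul_self, one_mul, diagonal_mul_diagonal, trace_diagonal]
  simp [sq]

lemma Matrix.PosSemidef.re_trace_mul_self_le {n 𝕜 : Type*} [Fintype n] [DecidableEq n]
    [RCLike 𝕜] {A : Matrix n n 𝕜} (hA : A.PosSemidef) :
    RCLike.re (A * A).trace ≤ RCLike.re A.trace ^ 2 := by
  rw [hA.1.trace_mul_self, hA.1.trace_eq_sum_eigenvalues]
  simp only [map_sum, RCLike.ofReal_re]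
  exact Finset.sum_sq_le_sq_sum_of_nonneg fun i _ => hA.eigenvalues_nonneg i

lemma trace_vecMulVec_star_mul_vecMulVec_star {n : Type*} [Fintype n] (φ χ : n → ℂ) :
    (vecMulVec φ (star φ) * vecMulVec χ (star χ)).trace = (‖star φ ⬝ᵥ χ‖ ^ 2 : ℝ) := by
  rw [vecMulVec_mul_vecMulVec, trace_vecMulVec, dotProduct_smul, smul_eq_mul,
    Complex.ofReal_pow, ← Complex.mul_conj']
  congr 1
  simp [dotProduct, mul_comm]

lemma Matrix.PosSemidef.im_trace_mul_vecMulVec_star_self {n : Type*} [Fintype n]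
    {σ : Matrix n n ℂ} (hσ : σ.PosSemidef) (ψ : n → ℂ) :
    (σ * vecMulVec ψ (star ψ)).trace.im = 0 := by
  rw [mul_vecMulVec, trace_vecMulVec, dotProduct_comm]
  exact (Complex.le_def.mp (hσ.dotProduct_mulVec_nonneg ψ)).2.symm

variable {d : ℕ} {ψ : Fin (d ^ 2) → Fin d → ℂ}

lemma IsSIC.trace_vecMulVec_star_mul (hψ : IsSIC d ψ) (i j : Fin (d ^ 2)) :
    (vecMulVec (ψ i) (star (ψ i)) * vecMulVec (ψ j) (star (ψ j))).trace =
      ((if i = j then (d : ℂ) else 0) + 1) / ((d : ℂ) + 1) := by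
  rw [trace_vecMulVec_star_mul_vecMulVec_star, hψ i j]
  push_cast [apply_ite (Complex.ofReal)]
  rfl

lemma IsSIC.trace_vecMulVec_star (hψ : IsSIC d ψ) (j : Fin (d ^ 2)) :
    (vecMulVec (ψ j) (star (ψ j))).trace = 1 := by
  have hnorm : ‖star (ψ j) ⬝ᵥ ψ j‖ = 1 := by
    have h := hψ j j
    rw [if_pos rfl, div_self (by positivity)] at h
    exact (pow_eq_one_iff_of_nonneg (norm_nonneg _) two_ne_zero).mp h
  rw [trace_vecMulVec, dotProduct_comm, Complex.eq_coe_norm_of_nonneg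
    (dotProduct_star_self_nonneg _), hnorm, Complex.ofReal_one]

lemma IsSIC.linearIndependent [NeZero d] (hψ : IsSIC d ψ) :
    LinearIndependent ℂ fun j => vecMulVec (ψ j) (star (ψ j)) := by
  rw [Fintype.linearIndependent_iff]
  intro g hg i
  have hsum : ∑ j, g j = 0 := by
    simpa [trace_sum, trace_smul, hψ.trace_vecMulVec_star] using congrArg trace hg
  have hi : ((d : ℂ) * g i + ∑ j, g j) / ((d : ℂ) + 1) = 0 := by
    have h := congrArg (fun X => (vecMulVec (ψ i) (star (ψ i)) * X).trace) hg
    simp only [Finset.mul_sum, Matrix.mul_smul, trace_sum, trace_smul,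
      hψ.trace_vecMulVec_star_mul, smul_eq_mul, mul_zero, trace_zero] at h
    rw [← h, add_div, Finset.sum_div]
    simp only [mul_div_assoc', mul_add, mul_ite, mul_zero, mul_one, add_div, ite_div, zero_div,
      Finset.sum_add_distrib, Finset.sum_ite_eq, Finset.mem_univ, if_true, mul_comm]
  rw [hsum, add_zero, div_eq_zero_iff] at hi
  exact (mul_eq_zero.mp (hi.resolve_right (Nat.cast_add_one_ne_zero d))).resolve_left
    (NeZero.ne _)

noncomputable def IsSIC.basis [NeZero d] (hψ : IsSIC d ψ) :
    Module.Basis (Fin (d ^ 2)) ℂ (Matrix (Fin d) (Fin d) ℂ) :=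
  basisOfLinearIndependentOfCardEqFinrank hψ.linearIndependent
    (by simp [Module.finrank_matrix, sq])

lemma IsSIC.coe_basis [NeZero d] (hψ : IsSIC d ψ) :
    ⇑hψ.basis = fun j => vecMulVec (ψ j) (star (ψ j)) :=
  coe_basisOfLinearIndependentOfCardEqFinrank _ _

lemma IsSIC.sum_trace_mul_mul_trace_mul_vecMulVec (hψ : IsSIC d ψ) (i j : Fin (d ^ 2)) :
    ∑ k, (vecMulVec (ψ i) (star (ψ i)) * vecMulVec (ψ k) (star (ψ k))).trace *
        (vecMulVec (ψ j) (star (ψ j)) * vecMulVec (ψ k) (star (ψ k))).trace =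
      (d : ℂ) / (d + 1) * ((vecMulVec (ψ i) (star (ψ i)) * vecMulVec (ψ j) (star (ψ j))).trace +
        (vecMulVec (ψ i) (star (ψ i))).trace * (vecMulVec (ψ j) (star (ψ j))).trace) := by
  simp only [hψ.trace_vecMulVec_star_mul, hψ.trace_vecMulVec_star, div_mul_div_comm, add_mul,
    mul_add, ite_mul, mul_ite, zero_mul, mul_zero, one_mul, mul_one, ← Finset.sum_div,
    Finset.sum_add_distrib, Finset.sum_ite_eq, Finset.mem_univ, if_true,
    Finset.sum_const, Finset.card_univ, Fintype.card_fin, nsmul_eq_mul]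
  have hd1 : (d : ℂ) + 1 ≠ 0 := Nat.cast_add_one_ne_zero d
  split_ifs <;> push_cast <;> field_simp <;> ring

theorem IsSIC.sum_trace_mul_mul_trace_mul [NeZero d] (hψ : IsSIC d ψ)
    (X Y : Matrix (Fin d) (Fin d) ℂ) :
    ∑ k, (X * vecMulVec (ψ k) (star (ψ k))).trace * (Y * vecMulVec (ψ k) (star (ψ k))).trace =
      (d : ℂ) / (d + 1) * ((X * Y).trace + X.trace * Y.trace) := by
  let B₁ : LinearMap.BilinForm ℂ (Matrix (Fin d) (Fin d) ℂ) := LinearMap.mk₂ ℂ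
    (fun X Y => ∑ k, (X * vecMulVec (ψ k) (star (ψ k))).trace *
      (Y * vecMulVec (ψ k) (star (ψ k))).trace)
    (fun _ _ _ => by simp only [add_mul, trace_add, Finset.sum_add_distrib])
    (fun _ _ _ => by
      simp only [Matrix.smul_mul, trace_smul, smul_eq_mul, Finset.mul_sum, mul_assoc])
    (fun _ _ _ => by simp only [add_mul, trace_add, mul_add, Finset.sum_add_distrib])
    (fun _ _ _ => by
      simp only [Matrix.smul_mul, trace_smul, smul_eq_mul, Finset.mul_sum, mul_left_comm])
  let B₂ : LinearMap.BilinForm ℂ (Matrix (Fin d) (Fin d) ℂ) := LinearMap.mk₂ ℂ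
    (fun X Y => (d : ℂ) / (d + 1) * ((X * Y).trace + X.trace * Y.trace))
    (fun _ _ _ => by simp only [Matrix.add_mul, trace_add]; ring)
    (fun _ _ _ => by simp only [Matrix.smul_mul, trace_smul, smul_eq_mul]; ring)
    (fun _ _ _ => by simp only [Matrix.mul_add, trace_add]; ring)
    (fun _ _ _ => by simp only [Matrix.mul_smul, trace_smul, smul_eq_mul]; ring)
  have hB : B₁ = B₂ := LinearMap.BilinForm.ext_basis hψ.basis fun i j => by
    simpa [B₁, B₂, hψ.coe_basis] using hψ.sum_trace_mul_mul_trace_mul_vecMulVec i j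
  exact LinearMap.congr_fun₂ hB X Y

lemma Matrix.PosSemidef.trace_mul_smul_sicProj {σ : Matrix (Fin d) (Fin d) ℂ}
    (hσ : σ.PosSemidef) (c : ℝ) (j : Fin (d ^ 2)) :
    (σ * ((c : ℂ) • sicProj d ψ j)).trace =
      ((c / d * (σ * vecMulVec (ψ j) (star (ψ j))).trace.re : ℝ) : ℂ) := by
  rw [sicProj, smul_smul, Matrix.mul_smul, trace_smul, smul_eq_mul]
  apply Complex.ext <;>
    simp [hσ.im_trace_mul_vecMulVec_star_self, div_eq_mul_inv]

theorem IsSIC.sum_sq_re_trace_mul_le_one [NeZero d] (hψ : IsSIC d ψ)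
    {σ : Matrix (Fin d) (Fin d) ℂ} (hσ : σ.PosSemidef) (hσ1 : σ.trace = 1) :
    ∑ j, (σ * ((√((d : ℝ) * ((d : ℝ) + 1) / 2) : ℝ) : ℂ) • sicProj d ψ j).trace.re ^ 2 ≤ 1 := by
  set t : Fin (d ^ 2) → ℝ := fun j => (σ * vecMulVec (ψ j) (star (ψ j))).trace.re
  have hsum : ∑ j, t j ^ 2 = d / (d + 1) * ((σ * σ).trace.re + 1) := by
    have h := hψ.sum_trace_mul_mul_trace_mul σ σ
    rw [hσ1, mul_one, show (d : ℂ) / (d + 1) = ((d / (d + 1) : ℝ) : ℂ) by push_cast; rfl] at h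
    simpa only [sq, t, Complex.re_sum, Complex.mul_re, hσ.im_trace_mul_vecMulVec_star_self,
      Complex.ofReal_re, Complex.ofReal_im, mul_zero, zero_mul, sub_zero, Complex.add_re,
      Complex.one_re]
      using congrArg Complex.re h
  have hpure : (σ * σ).trace.re ≤ 1 := by
    simpa [hσ1] using hσ.re_trace_mul_self_le
  have hd : (d : ℝ) ≠ 0 := Nat.cast_ne_zero.mpr (NeZero.ne d)
  calc ∑ j, (σ * ((√((d : ℝ) * ((d : ℝ) + 1) / 2) : ℝ) : ℂ) • sicProj d ψ j).trace.re ^ 2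
      = (√((d : ℝ) * ((d : ℝ) + 1) / 2) / d) ^ 2 * ∑ j, t j ^ 2 := by
        simp only [hσ.trace_mul_smul_sicProj, Complex.ofReal_re, mul_pow, ← Finset.mul_sum, t]
    _ = (d * (d + 1) / 2) / d ^ 2 * (d / (d + 1) * ((σ * σ).trace.re + 1)) := by
        rw [hsum, div_pow, Real.sq_sqrt (by positivity)]
    _ = ((σ * σ).trace.re + 1) / 2 := by field_simp
    _ ≤ 1 := by linarith

end SIC

lemma EuclideanSpace.norm_toLp_le_one {n : Type*} [Fintype n] {a : n → ℝ}
    (h : ∑ i, a i ^ 2 ≤ 1) : ‖WithLp.toLp 2 a‖ ≤ 1 := by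
  simpa [EuclideanSpace.norm_eq] using h

theorem esic_criterion (dA dB : ℕ) (hdA : 0 < dA) (hdB : 0 < dB)
    (ψA : Fin (dA ^ 2) → Fin dA → ℂ) (hsicA : IsSIC dA ψA)
    (ψB : Fin (dB ^ 2) → Fin dB → ℂ) (hsicB : IsSIC dB ψB)
    (EA : Fin (dA ^ 2) → Matrix (Fin dA) (Fin dA) ℂ)
    (hEA : ∀ j, EA j = (Real.sqrt ((dA : ℝ) * ((dA : ℝ) + 1) / 2) : ℂ) • sicProj dA ψA j)
    (EB : Fin (dB ^ 2) → Matrix (Fin dB) (Fin dB) ℂ)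
    (hEB : ∀ k, EB k = (Real.sqrt ((dB : ℝ) * ((dB : ℝ) + 1) / 2) : ℂ) • sicProj dB ψB k)
    (ρ : Matrix (Fin dA × Fin dB) (Fin dA × Fin dB) ℂ)
    (ι : Type) [Fintype ι] (w : ι → ℝ) (hw : ∀ i, 0 ≤ w i) (hw1 : ∑ i, w i = 1)
    (σA : ι → Matrix (Fin dA) (Fin dA) ℂ)
    (hσA : ∀ i, (σA i).PosSemidef ∧ (σA i).trace = 1)
    (σB : ι → Matrix (Fin dB) (Fin dB) ℂ)
    (hσB : ∀ i, (σB i).PosSemidef ∧ (σB i).trace = 1)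
    (hsep : ρ = ∑ i, (w i : ℂ) • (σA i ⊗ₖ σB i))
    (P : Matrix (Fin (dA ^ 2)) (Fin (dB ^ 2)) ℝ)
    (hP : ∀ j k, P j k = ((ρ * (EA j ⊗ₖ EB k)).trace).re) :
    traceNorm P ≤ 1 := by
  have : NeZero dA := ⟨hdA.ne'⟩
  have : NeZero dB := ⟨hdB.ne'⟩
  set a : ι → Fin (dA ^ 2) → ℝ := fun i j => (σA i * EA j).trace.re
  set b : ι → Fin (dB ^ 2) → ℝ := fun i k => (σB i * EB k).trace.re
  have ha : ∀ i j, (σA i * EA j).trace = a i j := fun i j => by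
    simp only [a, hEA, (hσA i).1.trace_mul_smul_sicProj, Complex.ofReal_re]
  have hb : ∀ i k, (σB i * EB k).trace = b i k := fun i k => by
    simp only [b, hEB, (hσB i).1.trace_mul_smul_sicProj, Complex.ofReal_re]
  have hPsep : P = ∑ i, w i • vecMulVec (a i) (b i) := by
    ext j k
    simp only [hP, hsep, Finset.sum_mul, Matrix.smul_mul, ← mul_kronecker_mul, trace_sum,
      trace_smul, trace_kronecker, ha, hb, smul_eq_mul, ← Complex.ofReal_mul, Complex.re_sum,
      Complex.ofReal_re, Matrix.sum_apply, Matrix.smul_apply, vecMulVec_apply]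
  have hnormA : ∀ i, ‖WithLp.toLp 2 (a i)‖ ≤ 1 := fun i => EuclideanSpace.norm_toLp_le_one
    (by simpa only [a, hEA] using hsicA.sum_sq_re_trace_mul_le_one (hσA i).1 (hσA i).2)
  have hnormB : ∀ i, ‖WithLp.toLp 2 (b i)‖ ≤ 1 := fun i => EuclideanSpace.norm_toLp_le_one
    (by simpa only [b, hEB] using hsicB.sum_sq_re_trace_mul_le_one (hσB i).1 (hσB i).2)
  calc traceNorm P
      ≤ ∑ i, w i * (‖WithLp.toLp 2 (a i)‖ * ‖WithLp.toLp 2 (b i)‖) :=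
        hPsep ▸ traceNorm_sum_smul_vecMulVec_le w hw a b
    _ ≤ ∑ i, w i * (1 * 1) := by
        gcongr with i
        exacts [hw i, hnormA i, hnormB i]
    _ = 1 := by simp [hw1]
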